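/- arXiv:2503.00247 — 2 statements merged into one kernel-verified Lean document; each statement's English description precedes it below -/
import Mathlib

section
/- Let p be an odd prime, m ≥ 1 an integer, and r₁, r₂ natural numbers such that (p−1)·p^{m−1} divides 2(r₁ − r₂) as integers but (p−1)·p^{m−1} does not divide r₁ − r₂. Then for every unit u of ℤ/p^mℤ one has u^{r₁} = (u₀/p) · u^{r₂} in ℤ/p^mℤ, where u₀ ∈ ℤ is any integer representing u and (·/p) is the Legendre symbol cast into ℤ/p^mℤ. -/
/-!
Write `φ(p^m) = (p - 1) p^(m-1) = 2n`. The hypotheses say `r₁ - r₂ ≡ n (mod 2n)`, so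
`u^r₁ = u^r₂ · u^n`. The element `x = u^n` squares to `1`, and modulo `p` it is
`u₀^((p-1)/2 · p^(m-1)) ≡ (u₀/p)^(p^(m-1)) = (u₀/p)` by Euler's criterion. Two square roots of the
same element that agree and are nonzero modulo the odd prime `p` agree modulo `p^m`, because their
sum is a unit.
-/

theorem Nat.totient_prime_pow_eq_two_mul {p m : ℕ} (hp : p.Prime) (hp2 : p ≠ 2) (hm : 1 ≤ m) :
    Nat.totient (p ^ m) = 2 * (p / 2 * p ^ (m - 1)) := by
  rw [Nat.totient_prime_pow hp hm, ← mul_assoc,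
    Nat.two_mul_odd_div_two (Nat.odd_iff.mp (hp.odd_of_ne_two hp2)), mul_comm]

namespace ZMod

theorem isUnit_of_castHom_ne_zero {p m : ℕ} (hp : p.Prime) (hm : m ≠ 0) {y : ZMod (p ^ m)}
    (hy : castHom (dvd_pow_self p hm) (ZMod p) y ≠ 0) : IsUnit y := by
  have : NeZero (p ^ m) := ⟨pow_ne_zero m hp.ne_zero⟩
  rw [← natCast_zmod_val y, isUnit_natCast_iff_not_dvd_pow hp (Nat.pos_of_ne_zero hm),
    ← natCast_eq_zero_iff]
  rwa [← natCast_zmod_val y, map_natCast] at hy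

theorem eq_of_sq_eq_sq_of_castHom_eq {p m : ℕ} [Fact p.Prime] (hp : p ≠ 2) (hm : m ≠ 0)
    {x y : ZMod (p ^ m)} (hsq : x ^ 2 = y ^ 2)
    (hxy : castHom (dvd_pow_self p hm) (ZMod p) x = castHom (dvd_pow_self p hm) (ZMod p) y)
    (hy : castHom (dvd_pow_self p hm) (ZMod p) y ≠ 0) : x = y := by
  have hsum : IsUnit (x + y) := by
    refine isUnit_of_castHom_ne_zero Fact.out hm ?_
    rw [map_add, hxy, ← two_mul]
    exact mul_ne_zero (Ring.two_ne_zero (by rwa [ringChar_zmod_n])) hy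
  have : (x - y) * (x + y) = 0 := by linear_combination hsq
  exact sub_eq_zero.mp ((hsum.mul_left_eq_zero).mp this)

end ZMod

theorem legendreSym.pow_odd {p : ℕ} [Fact p.Prime] {a : ℤ} (ha : (a : ZMod p) ≠ 0) {k : ℕ}
    (hk : Odd k) : legendreSym p a ^ k = legendreSym p a := by
  obtain ⟨j, rfl⟩ := hk
  rw [pow_succ, pow_mul, legendreSym.sq_one p ha, one_pow, one_mul]

theorem ZMod.euler_criterion_prime_pow {p m : ℕ} [Fact p.Prime] (hp : p ≠ 2) (hm : 1 ≤ m)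
    {a : ℤ} (ha : IsUnit (a : ZMod (p ^ m))) :
    (a : ZMod (p ^ m)) ^ (p / 2 * p ^ (m - 1)) = legendreSym p a := by
  have hm0 : m ≠ 0 := Nat.one_le_iff_ne_zero.mp hm
  set φ := castHom (dvd_pow_self p hm0) (ZMod p)
  have ha' : (a : ZMod p) ≠ 0 := by
    have := ha.map φ
    rw [map_intCast] at this
    exact this.ne_zero
  apply eq_of_sq_eq_sq_of_castHom_eq hp hm0
  · rw [← pow_mul, mul_comm, ← Nat.totient_prime_pow_eq_two_mul Fact.out hp hm, ← ha.unit_spec,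
      ← Units.val_pow_eq_pow_val, pow_totient, Units.val_one, ← Int.cast_pow,
      legendreSym.sq_one p ha', Int.cast_one]
  · rw [map_pow, map_intCast, map_intCast, pow_mul, ← legendreSym.eq_pow, ← Int.cast_pow,
      legendreSym.pow_odd ha' ((Nat.Prime.odd_of_ne_two Fact.out hp).pow)]
  · rw [map_intCast, legendreSym.eq_pow]
    exact pow_ne_zero _ ha'

theorem zpow_eq_zpow_mul_pow_of_dvd_two_mul {G : Type*} [Group G] {g : G} {n : ℕ}
    (hg : g ^ (2 * n) = 1) {a b : ℤ} (h1 : (2 * n : ℤ) ∣ 2 * (a - b))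
    (h2 : ¬ (2 * n : ℤ) ∣ a - b) : g ^ a = g ^ b * g ^ n := by
  obtain ⟨t, ht⟩ := h1
  have hab : a - b = n * t := by linarith
  obtain ⟨k, rfl⟩ : Odd t := Int.not_even_iff_odd.mp fun ⟨k, hk⟩ ↦ h2 ⟨k, by rw [hab, hk]; ring⟩
  have : a = b + (2 * n : ℕ) * k + n := by push_cast; linarith
  rw [this, zpow_add, zpow_add, zpow_mul, zpow_natCast, hg, one_zpow, mul_one, zpow_natCast]

/-- If `(p-1)·p^{m-1} ∣ 2(r₁ - r₂)` but `(p-1)·p^{m-1} ∤ (r₁ - r₂)`, then for every unit `u`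
of `ℤ/p^mℤ` with integer representative `u₀`, `u^{r₁} = (u₀/p)·u^{r₂}` in `ℤ/p^mℤ`. -/
theorem stmt_2 (p : ℕ) [Fact p.Prime] (hodd : Odd p) (m : ℕ) (hm : 1 ≤ m) (r₁ r₂ : ℕ)
    (h1 : ((p - 1 : ℤ) * (p : ℤ) ^ (m - 1)) ∣ 2 * ((r₁ : ℤ) - (r₂ : ℤ)))
    (h2 : ¬ ((p - 1 : ℤ) * (p : ℤ) ^ (m - 1)) ∣ ((r₁ : ℤ) - (r₂ : ℤ)))
    (u : (ZMod (p ^ m))ˣ) (u₀ : ℤ) (hu₀ : (u₀ : ZMod (p ^ m)) = (u : ZMod (p ^ m))) :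
    (u : ZMod (p ^ m)) ^ r₁ =
      ((legendreSym p u₀ : ℤ) : ZMod (p ^ m)) * (u : ZMod (p ^ m)) ^ r₂ := by
  have hp : p ≠ 2 := by rintro rfl; exact Nat.not_odd_iff_even.mpr even_two hodd
  have htot := Nat.totient_prime_pow_eq_two_mul Fact.out hp hm
  have hN : ((p - 1 : ℤ) * (p : ℤ) ^ (m - 1)) = ((2 * (p / 2 * p ^ (m - 1)) : ℕ) : ℤ) := by
    rw [← htot, Nat.totient_prime_pow Fact.out hm]
    push_cast [(Fact.out : p.Prime).one_le]
    ring
  have hu := zpow_eq_zpow_mul_pow_of_dvd_two_mul (htot ▸ ZMod.pow_totient u)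
    (a := r₁) (b := r₂) (by exact_mod_cast hN ▸ h1) (by exact_mod_cast hN ▸ h2)
  rw [zpow_natCast, zpow_natCast] at hu
  rw [← Units.val_pow_eq_pow_val, hu, Units.val_mul, Units.val_pow_eq_pow_val,
    Units.val_pow_eq_pow_val, ← hu₀, ZMod.euler_criterion_prime_pow hp hm (hu₀ ▸ u.isUnit),
    mul_comm]
end

section
/- Let p be a prime, k a field of characteristic p, and a ≥ 1 a natural number. In the formal power series ring k⟦X⟧, the X-adic order of the power series 1 − (1 + X)^a equals p^{v}, where v = v_p(a) is the p-adic valuation of a (the largest exponent with p^v dividing a). -/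
/-!
Write `a = p^v * b` with `p ∤ b`. Frobenius gives `(1 + X)^a = (1 + Y)^b` with `Y = X^(p^v)`, and
`1 - (1 + Y)^b = -Y * ∑_{i<b} (1 + Y)^i`, where the sum has constant term `b ≠ 0` in `k`, hence is
a unit; so the order is that of `Y`, namely `p^v`.
-/

open PowerSeries Finset

theorem Nat.not_dvd_div_pow_padicValNat {p n : ℕ} (hp : p.Prime) (hn : n ≠ 0) :
    ¬p ∣ n / p ^ padicValNat p n := by
  simpa [Nat.factorization_def n hp] using Nat.not_dvd_ordCompl hp hn

theorem PowerSeries.order_one_sub_add_one_pow {R : Type*} [CommRing R] [NoZeroDivisors R]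
    {f : R⟦X⟧} (hf : constantCoeff f = 0) {n : ℕ} (hn : (n : R) ≠ 0) :
    order (1 - (f + 1) ^ n) = order f := by
  have hsum : order (∑ i ∈ range n, (f + 1) ^ i) = 0 := by
    by_contra h
    exact hn (by simpa [hf] using order_ne_zero_iff_constCoeff_eq_zero.mp h)
  rw [← geom_sum_mul_add, sub_add_cancel_right, order_neg, order_mul, hsum, zero_add]

/-- In characteristic `p`, the `X`-adic order of `1 - (1 + X)^a` in `k⟦X⟧` is `p^{v_p(a)}`. -/
theorem stmt_4 (p : ℕ) (hp : p.Prime) (k : Type*) [Field k] [CharP k p] (a : ℕ) (ha : 1 ≤ a) :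
    PowerSeries.order (1 - (1 + PowerSeries.X : PowerSeries k) ^ a) =
      ((p ^ (padicValNat p a) : ℕ) : ℕ∞) := by
  have : Fact p.Prime := ⟨hp⟩
  have : CharP k⟦X⟧ p := charP_of_injective_ringHom (C_injective (R := k)) p
  set q := p ^ padicValNat p a
  obtain ⟨b, hab⟩ : q ∣ a := pow_padicValNat_dvd
  have hb : (b : k) ≠ 0 := by
    have hba : a / q = b := by rw [hab, Nat.mul_div_cancel_left _ (pow_pos hp.pos _)]
    have hpb : ¬p ∣ a / q := Nat.not_dvd_div_pow_padicValNat hp (by omega)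
    rwa [hba, ← CharP.cast_eq_zero_iff k p] at hpb
  have hfrob : (1 + X : k⟦X⟧) ^ a = (X ^ q + 1) ^ b := by
    rw [hab, pow_mul, add_pow_char_pow, one_pow, add_comm]
  rw [hfrob, order_one_sub_add_one_pow (by simp [q, hp.ne_zero]) hb, order_X_pow]
end
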